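/- Let F = {f_i} be a J-frame for a Krein space H with J-frame operator S, and let S^{1/2} be its J-selfadjoint holomorphic square root. Then P = {S^{-1/2} f_i}_{i∈I} is a Parseval J-frame for H (its J-frame operator is the identity), it is similar to F via S^{-1/2}, and sgn[S^{-1/2}f_i, S^{-1/2}f_i] = sgn[f_i, f_i] for every i. -/

import Mathlib

noncomputable section

open scoped Classical

open Function

/-- The indefinite inner product `[x,y] = ⟨Jx, y⟩` induced by an operator `J`. -/
def kre {E : Type*} [NormedAddCommGroup E] [InnerProductSpace ℂ E]
    (J : E →L[ℂ] E) (x y : E) : ℂ := @inner ℂ _ _ (J x) y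

/-- `J` is a fundamental symmetry: a selfadjoint unitary (involutive) operator. -/
def IsFundSym {E : Type*} [NormedAddCommGroup E] [InnerProductSpace ℂ E] [CompleteSpace E]
    (J : E →L[ℂ] E) : Prop :=
  IsSelfAdjoint J ∧ J.comp J = ContinuousLinearMap.id ℂ E

/-- The J-orthogonal companion of a subspace. -/
def JorthCompanion {E : Type*} [NormedAddCommGroup E] [InnerProductSpace ℂ E]
    (J : E →L[ℂ] E) (S : Submodule ℂ E) : Submodule ℂ E where
  carrier := {x | ∀ s ∈ S, kre J x s = 0}
  zero_mem' := by intro s hs; simp [kre]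
  add_mem' := by
    intro a b ha hb s hs
    have h1 := ha s hs
    have h2 := hb s hs
    simp only [kre, map_add, inner_add_left] at h1 h2 ⊢
    rw [h1, h2, add_zero]
  smul_mem' := by
    intro c x hx s hs
    have h1 := hx s hs
    simp only [kre, map_smul, inner_smul_left] at h1 ⊢
    rw [h1, mul_zero]

/-- Uniformly J-positive subspace. -/
def UnifJPos {E : Type*} [NormedAddCommGroup E] [InnerProductSpace ℂ E]
    (J : E →L[ℂ] E) (S : Submodule ℂ E) : Prop :=
  ∃ α : ℝ, 0 < α ∧ ∀ x ∈ S, α * ‖x‖ ^ 2 ≤ (kre J x x).re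

/-- Uniformly J-negative subspace. -/
def UnifJNeg {E : Type*} [NormedAddCommGroup E] [InnerProductSpace ℂ E]
    (J : E →L[ℂ] E) (S : Submodule ℂ E) : Prop :=
  ∃ α : ℝ, 0 < α ∧ ∀ x ∈ S, (kre J x x).re ≤ -(α * ‖x‖ ^ 2)

/-- Maximal uniformly J-positive subspace. -/
def MaxUnifJPos {E : Type*} [NormedAddCommGroup E] [InnerProductSpace ℂ E]
    (J : E →L[ℂ] E) (S : Submodule ℂ E) : Prop :=
  UnifJPos J S ∧ ∀ S' : Submodule ℂ E, UnifJPos J S' → S ≤ S' → S' = S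

/-- Maximal uniformly J-negative subspace. -/
def MaxUnifJNeg {E : Type*} [NormedAddCommGroup E] [InnerProductSpace ℂ E]
    (J : E →L[ℂ] E) (S : Submodule ℂ E) : Prop :=
  UnifJNeg J S ∧ ∀ S' : Submodule ℂ E, UnifJNeg J S' → S ≤ S' → S' = S

/-- J-selfadjoint operator (with respect to the indefinite inner product of `J`). -/
def IsJSelfAdj {E : Type*} [NormedAddCommGroup E] [InnerProductSpace ℂ E]
    (J : E →L[ℂ] E) (A : E →L[ℂ] E) : Prop :=
  ∀ x y : E, kre J (A x) y = kre J x (A y)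

/-- The J-order: `A ≤_J B` iff `B - A` is J-positive. -/
def JLe {E : Type*} [NormedAddCommGroup E] [InnerProductSpace ℂ E]
    (J : E →L[ℂ] E) (A B : E →L[ℂ] E) : Prop :=
  ∀ x : E, 0 ≤ (kre J (B x - A x) x).re ∧ (kre J (B x - A x) x).im = 0

/-- The subspace of `ℓ²(I)` supported on a subset (given by a predicate) of `I`. -/
def suppSub {I : Type*} (A : I → Prop) : Submodule ℂ (lp (fun _ : I => ℂ) 2) where
  carrier := {x | ∀ i, ¬ A i → x i = 0}
  zero_mem' := by intro i _; rfl
  add_mem' := by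
    intro a b ha hb i hi
    have : (↑(a + b) : ∀ i, ℂ) i = a i + b i := by
      rw [lp.coeFn_add]; rfl
    simp [this, ha i hi, hb i hi]
  smul_mem' := by
    intro c x hx i hi
    have : (↑(c • x) : ∀ i, ℂ) i = c • x i := by
      rw [lp.coeFn_smul]; rfl
    simp [this, hx i hi]

variable {H : Type*} [NormedAddCommGroup H] [InnerProductSpace ℂ H] [CompleteSpace H]
variable {I : Type*} [DecidableEq I]

/-- `i` is a "positive index" for the family `f` w.r.t. `J`: `[f i, f i] ≥ 0`. -/
def posIdx {H : Type*} [NormedAddCommGroup H] [InnerProductSpace ℂ H]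
    (J : H →L[ℂ] H) (f : I → H) (i : I) : Prop := 0 ≤ (kre J (f i) (f i)).re

/-- The sign `σ_i = sgn [f i, f i]` (as a complex scalar, `+1` on `I₊` and `-1` on `I₋`). -/
def sgnv {H : Type*} [NormedAddCommGroup H] [InnerProductSpace ℂ H]
    (J : H →L[ℂ] H) (f : I → H) (i : I) : ℂ := if posIdx J f i then 1 else -1

/-- Closure of the span of the vectors of the family `h` with positive indices (signs taken
from the family `f`). -/
def posSpan {H : Type*} [NormedAddCommGroup H] [InnerProductSpace ℂ H]
    (J : H →L[ℂ] H) (f h : I → H) : Submodule ℂ H :=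
  (Submodule.span ℂ {x | ∃ i, posIdx J f i ∧ h i = x}).topologicalClosure

/-- Closure of the span of the vectors of the family `h` with negative indices. -/
def negSpan {H : Type*} [NormedAddCommGroup H] [InnerProductSpace ℂ H]
    (J : H →L[ℂ] H) (f h : I → H) : Submodule ℂ H :=
  (Submodule.span ℂ {x | ∃ i, ¬ posIdx J f i ∧ h i = x}).topologicalClosure

/-- A Bessel family in a Hilbert space. -/
def IsBessel {H : Type*} [NormedAddCommGroup H] [InnerProductSpace ℂ H]
    (g : I → H) : Prop :=
  ∃ β : ℝ, ∀ (x : H) (s : Finset I),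
    ∑ i ∈ s, ‖@inner ℂ _ _ (g i) x‖ ^ 2 ≤ β * ‖x‖ ^ 2

/-- `g` is a dual family for `f`: the signs coincide and the two indefinite
reconstruction formulas hold. -/
def IsDualFamily {H : Type*} [NormedAddCommGroup H] [InnerProductSpace ℂ H]
    (J : H →L[ℂ] H) (f g : I → H) : Prop :=
  (∀ i, Real.sign ((kre J (g i) (g i)).re) = Real.sign ((kre J (f i) (f i)).re)) ∧
  (∀ x : H, HasSum (fun i => (sgnv J f i * kre J x (f i)) • g i) x) ∧
  (∀ x : H, HasSum (fun i => (sgnv J f i * kre J x (g i)) • f i) x)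


/-!
Write `S = T T⁺ = R²` and `M± = T (P± ℓ²)`. If `S u ∈ M₊`, then `T (P₋ T⁺ u)` lies in
`M₊ ∩ M₋ = 0`, so `0 = [T P₋ T⁺ u, u] = -‖P₋ T⁺ u‖²` and hence `[S u, u] = ‖T⁺ u‖²`.
For `v = R⁻¹ m` with `m ∈ M₊`, J-selfadjointness of `R` gives
`[v, v] = [m, R⁻² m] = ‖T⁺ R⁻² m‖²`, while `‖v‖ ≤ ‖R⁻¹‖ ‖T‖ ‖T⁺ R⁻² m‖`: so `R⁻¹ M₊` is
uniformly J-positive, and (replacing `J` by `-J`) `R⁻¹ M₋` is uniformly J-negative.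
As `R⁻¹ T` is onto, the two subspaces span `H`, which forces both to be maximal.
-/

open scoped InnerProductSpace

section Krein

variable {E : Type*} [NormedAddCommGroup E] [InnerProductSpace ℂ E]

theorem kre_neg (J : E →L[ℂ] E) (x y : E) : kre (-J) x y = -kre J x y := by
  simp [kre, inner_neg_left]

theorem unifJPos_neg_iff {J : E →L[ℂ] E} {S : Submodule ℂ E} :
    UnifJPos (-J) S ↔ UnifJNeg J S := by
  simp only [UnifJPos, UnifJNeg, kre_neg, Complex.neg_re, le_neg]

theorem unifJNeg_neg_iff {J : E →L[ℂ] E} {S : Submodule ℂ E} :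
    UnifJNeg (-J) S ↔ UnifJPos J S := by
  simp only [UnifJPos, UnifJNeg, kre_neg, Complex.neg_re, neg_le_neg_iff]

theorem maxUnifJPos_neg_iff {J : E →L[ℂ] E} {S : Submodule ℂ E} :
    MaxUnifJPos (-J) S ↔ MaxUnifJNeg J S := by
  simp only [MaxUnifJPos, MaxUnifJNeg, unifJPos_neg_iff]

theorem IsJSelfAdj.neg {J A : E →L[ℂ] E} (hA : IsJSelfAdj J A) : IsJSelfAdj (-J) A :=
  fun x y => by rw [kre_neg, kre_neg, hA]

theorem UnifJPos.re_kre_pos {J : E →L[ℂ] E} {S : Submodule ℂ E} (hS : UnifJPos J S)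
    {x : E} (hx : x ∈ S) (hx0 : x ≠ 0) : 0 < (kre J x x).re := by
  obtain ⟨α, hα, hle⟩ := hS
  exact (mul_pos hα (pow_pos (norm_pos_iff.mpr hx0) 2)).trans_le (hle x hx)

theorem UnifJPos.disjoint {J : E →L[ℂ] E} {M N : Submodule ℂ E} (hM : UnifJPos J M)
    (hN : UnifJNeg J N) : Disjoint M N := by
  refine Submodule.disjoint_def.mpr fun x hxM hxN => by_contra fun hx0 => ?_
  have hneg := (unifJPos_neg_iff.mpr hN).re_kre_pos hxN hx0
  rw [kre_neg, Complex.neg_re] at hneg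
  exact (hM.re_kre_pos hxM hx0).not_gt (neg_pos.mp hneg)

theorem UnifJPos.maxUnifJPos {J : E →L[ℂ] E} {M N : Submodule ℂ E} (hM : UnifJPos J M)
    (hN : UnifJNeg J N) (hMN : M ⊔ N = ⊤) : MaxUnifJPos J M := by
  refine ⟨hM, fun S hS hMS => le_antisymm (fun x hx => ?_) hMS⟩
  obtain ⟨a, ha, b, hb, rfl⟩ := Submodule.mem_sup.mp (hMN ▸ Submodule.mem_top : x ∈ M ⊔ N)
  have hbS : b ∈ S := by simpa using S.sub_mem hx (hMS ha)
  rw [Submodule.disjoint_def.mp (hS.disjoint hN) b hbS hb, add_zero]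
  exact ha

theorem UnifJNeg.maxUnifJNeg {J : E →L[ℂ] E} {M N : Submodule ℂ E} (hN : UnifJNeg J N)
    (hM : UnifJPos J M) (hMN : M ⊔ N = ⊤) : MaxUnifJNeg J N :=
  maxUnifJPos_neg_iff.mp <|
    (unifJPos_neg_iff.mpr hN).maxUnifJPos (unifJNeg_neg_iff.mpr hM) (sup_comm M N ▸ hMN)

theorem UnifJPos.sign_re_kre_apply {J A : E →L[ℂ] E} {M W : Submodule ℂ E}
    (hM : UnifJPos J M) (hW : UnifJPos J W) (hA : Injective A) {x : E} (hx : x ∈ M)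
    (hAx : A x ∈ W) : Real.sign (kre J (A x) (A x)).re = Real.sign (kre J x x).re := by
  by_cases hx0 : x = 0
  · simp [hx0]
  · have hAx0 : A x ≠ 0 := (map_ne_zero_iff A hA).mpr hx0
    rw [Real.sign_of_pos (hW.re_kre_pos hAx hAx0), Real.sign_of_pos (hM.re_kre_pos hx hx0)]

theorem UnifJNeg.sign_re_kre_apply {J A : E →L[ℂ] E} {M W : Submodule ℂ E}
    (hM : UnifJNeg J M) (hW : UnifJNeg J W) (hA : Injective A) {x : E} (hx : x ∈ M)
    (hAx : A x ∈ W) : Real.sign (kre J (A x) (A x)).re = Real.sign (kre J x x).re := by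
  have h := (unifJPos_neg_iff.mpr hM).sign_re_kre_apply (unifJPos_neg_iff.mpr hW) hA hx hAx
  simpa only [kre_neg, Complex.neg_re, Real.sign_neg, neg_inj] using h

end Krein

structure IsComplOrthProj {E : Type*} [NormedAddCommGroup E] [InnerProductSpace ℂ E]
    (P Q : E →L[ℂ] E) : Prop where
  add_apply : ∀ x, P x + Q x = x
  inner_apply_apply : ∀ x y, ⟪P x, Q y⟫_ℂ = 0

namespace IsComplOrthProj

variable {E F : Type*} [NormedAddCommGroup E] [InnerProductSpace ℂ E]
  [NormedAddCommGroup F] [InnerProductSpace ℂ F] {P Q : E →L[ℂ] E}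

theorem symm (hPQ : IsComplOrthProj P Q) : IsComplOrthProj Q P where
  add_apply x := (add_comm _ _).trans (hPQ.add_apply x)
  inner_apply_apply x y := inner_eq_zero_symm.mp (hPQ.inner_apply_apply y x)

theorem apply_apply_eq_zero (hPQ : IsComplOrthProj P Q) (x : E) : P (Q x) = 0 := by
  have hPQx : P (Q x) = Q x - Q (Q x) := eq_sub_of_add_eq (hPQ.add_apply (Q x))
  refine inner_self_eq_zero (𝕜 := ℂ) |>.mp ?_
  calc ⟪P (Q x), P (Q x)⟫_ℂ = ⟪P (Q x), Q x - Q (Q x)⟫_ℂ := congrArg _ hPQx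
    _ = 0 := by rw [inner_sub_right, hPQ.inner_apply_apply, hPQ.inner_apply_apply, sub_zero]

theorem apply_apply_self (hPQ : IsComplOrthProj P Q) (x : E) : Q (Q x) = Q x := by
  simpa [hPQ.apply_apply_eq_zero] using hPQ.add_apply (Q x)

theorem kre_sub (hPQ : IsComplOrthProj P Q) (x y : E) :
    kre (P - Q) x y = ⟪P x, P y⟫_ℂ - ⟪Q x, Q y⟫_ℂ := by
  conv_lhs => rw [← hPQ.add_apply y]
  rw [kre, _root_.sub_apply, inner_sub_left, inner_add_right, inner_add_right,
    hPQ.inner_apply_apply, hPQ.symm.inner_apply_apply]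
  ring

theorem sup_range_comp_eq_top (hPQ : IsComplOrthProj P Q) {A : E →L[ℂ] F}
    (hA : Surjective A) :
    LinearMap.range (A.comp P : E →ₗ[ℂ] F) ⊔ LinearMap.range (A.comp Q : E →ₗ[ℂ] F) =
      ⊤ := by
  refine eq_top_iff.mpr fun z _ => ?_
  obtain ⟨x, rfl⟩ := hA z
  refine Submodule.mem_sup.mpr ⟨A (P x), ⟨x, rfl⟩, A (Q x), ⟨x, rfl⟩, ?_⟩
  rw [← map_add, hPQ.add_apply]

end IsComplOrthProj

section lp

variable {ι : Type*} {p : ι → Prop}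
  {P Q : lp (fun _ : ι => ℂ) 2 →L[ℂ] lp (fun _ : ι => ℂ) 2}

theorem isComplOrthProj_of_apply (hP : ∀ x i, P x i = if p i then x i else 0)
    (hQ : ∀ x i, Q x i = if p i then 0 else x i) : IsComplOrthProj P Q where
  add_apply x := lp.ext <| funext fun i => by
    simp only [lp.coeFn_add, Pi.add_apply, hP, hQ]
    split_ifs <;> simp
  inner_apply_apply x y := by
    rw [lp.inner_eq_tsum]
    refine (tsum_congr fun i => ?_).trans tsum_zero
    rw [hP, hQ]
    split_ifs <;> simp

theorem apply_lp_single_of_apply [DecidableEq ι] (hP : ∀ x i, P x i = if p i then x i else 0)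
    {i : ι} (hi : p i) (c : ℂ) : P (lp.single 2 i c) = lp.single 2 i c :=
  lp.ext <| funext fun j => by
    rw [hP]
    by_cases hji : j = i
    · subst hji; simp [hi]
    · simp [hji]

end lp

section Transport

variable {E F : Type*} [NormedAddCommGroup E] [InnerProductSpace ℂ E]
  [NormedAddCommGroup F] [InnerProductSpace ℂ F]
  {J : F →L[ℂ] F} {P Q : E →L[ℂ] E} {T : E →L[ℂ] F} {Tp : F →L[ℂ] E}

theorem kre_apply_adjoint_eq_norm_sq (hPQ : IsComplOrthProj P Q)
    (hTp : ∀ x y, kre J (T x) y = kre (P - Q) x (Tp y))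
    (hdisj : Disjoint (LinearMap.range (T.comp P : E →ₗ[ℂ] F))
      (LinearMap.range (T.comp Q : E →ₗ[ℂ] F)))
    {u : F} (hu : T (Tp u) ∈ LinearMap.range (T.comp P : E →ₗ[ℂ] F)) :
    kre J (T (Tp u)) u = (‖Tp u‖ : ℂ) ^ 2 := by
  set w := Tp u
  have hTQw : T (Q w) = 0 := by
    refine Submodule.disjoint_def.mp hdisj _ ?_ ⟨w, rfl⟩
    have h : T (Q w) = T w - T (P w) := by
      rw [← map_sub, ← eq_sub_of_add_eq' (hPQ.add_apply w)]
    exact h ▸ Submodule.sub_mem _ hu ⟨w, rfl⟩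
  have hQw : Q w = 0 := by
    have h : kre J (T (Q w)) u = -⟪Q w, Q w⟫_ℂ := by
      rw [hTp, hPQ.kre_sub, hPQ.apply_apply_eq_zero, hPQ.apply_apply_self, inner_zero_left,
        zero_sub]
    rw [hTQw, kre, map_zero, inner_zero_left, eq_comm, neg_eq_zero] at h
    exact inner_self_eq_zero.mp h
  have hPw : P w = w := by simpa [hQw] using hPQ.add_apply w
  rw [hTp, hPQ.kre_sub, hQw, hPw, inner_zero_left, sub_zero, inner_self_eq_norm_sq_to_K]
  rfl

theorem unifJPos_range_inv_comp (hPQ : IsComplOrthProj P Q)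
    (hTp : ∀ x y, kre J (T x) y = kre (P - Q) x (Tp y))
    (hdisj : Disjoint (LinearMap.range (T.comp P : E →ₗ[ℂ] F))
      (LinearMap.range (T.comp Q : E →ₗ[ℂ] F)))
    {R Rinv : F →L[ℂ] F} (hRsq : R.comp R = T.comp Tp) (hR : IsJSelfAdj J R)
    (hRRinv : R.comp Rinv = ContinuousLinearMap.id ℂ F) :
    UnifJPos J (LinearMap.range ((Rinv.comp T).comp P : E →ₗ[ℂ] F)) := by
  have hRRinv' (x : F) : R (Rinv x) = x := DFunLike.congr_fun hRRinv x
  refine ⟨((‖Rinv‖ * ‖T‖) ^ 2 + 1)⁻¹, by positivity, ?_⟩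
  rintro _ ⟨x, rfl⟩
  set m := T (P x)
  set v := Rinv m
  change ((‖Rinv‖ * ‖T‖) ^ 2 + 1)⁻¹ * ‖v‖ ^ 2 ≤ (kre J v v).re
  set u := Rinv v
  have hSu : T (Tp u) = m := by
    rw [← ContinuousLinearMap.comp_apply T Tp, ← hRsq, ContinuousLinearMap.comp_apply,
      hRRinv', hRRinv']
  have hkre : kre J v v = (‖Tp u‖ : ℂ) ^ 2 := calc
    kre J v v = kre J (R v) u := by rw [hR, hRRinv']
    _ = kre J (T (Tp u)) u := by rw [hSu, hRRinv']
    _ = (‖Tp u‖ : ℂ) ^ 2 := kre_apply_adjoint_eq_norm_sq hPQ hTp hdisj (hSu ▸ ⟨x, rfl⟩)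
  have hnorm : ‖v‖ ≤ ‖Rinv‖ * ‖T‖ * ‖Tp u‖ := calc
    ‖v‖ ≤ ‖Rinv‖ * ‖T (Tp u)‖ := hSu ▸ Rinv.le_opNorm m
    _ ≤ ‖Rinv‖ * (‖T‖ * ‖Tp u‖) := by gcongr; exact T.le_opNorm _
    _ = ‖Rinv‖ * ‖T‖ * ‖Tp u‖ := (mul_assoc _ _ _).symm
  rw [hkre, ← Complex.ofReal_pow, Complex.ofReal_re, inv_mul_le_iff₀ (by positivity)]
  calc ‖v‖ ^ 2 ≤ (‖Rinv‖ * ‖T‖) ^ 2 * ‖Tp u‖ ^ 2 := by rw [← mul_pow]; gcongr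
    _ ≤ ((‖Rinv‖ * ‖T‖) ^ 2 + 1) * ‖Tp u‖ ^ 2 := by
      gcongr; exact le_add_of_nonneg_right zero_le_one

theorem unifJNeg_range_inv_comp (hPQ : IsComplOrthProj P Q)
    (hTp : ∀ x y, kre J (T x) y = kre (P - Q) x (Tp y))
    (hdisj : Disjoint (LinearMap.range (T.comp P : E →ₗ[ℂ] F))
      (LinearMap.range (T.comp Q : E →ₗ[ℂ] F)))
    {R Rinv : F →L[ℂ] F} (hRsq : R.comp R = T.comp Tp) (hR : IsJSelfAdj J R)
    (hRRinv : R.comp Rinv = ContinuousLinearMap.id ℂ F) :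
    UnifJNeg J (LinearMap.range ((Rinv.comp T).comp Q : E →ₗ[ℂ] F)) :=
  unifJPos_neg_iff.mp <| unifJPos_range_inv_comp hPQ.symm
    (fun x y => by rw [kre_neg, hTp, ← neg_sub P Q, kre_neg]) hdisj.symm hRsq hR.neg hRRinv

end Transport

theorem canonical_parseval_jframe_general
    (J : H →L[ℂ] H) (f : I → H)
    (T : lp (fun _ : I => ℂ) 2 →L[ℂ] H)
    (hT : ∀ i, T (lp.single 2 i (1:ℂ)) = f i)
    (hTsurj : Function.Surjective T)
    (Pp Pm : lp (fun _ : I => ℂ) 2 →L[ℂ] lp (fun _ : I => ℂ) 2)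
    (hPp : ∀ (x : lp (fun _ : I => ℂ) 2) (i : I), Pp x i = if posIdx J f i then x i else 0)
    (hPm : ∀ (x : lp (fun _ : I => ℂ) 2) (i : I), Pm x i = if posIdx J f i then 0 else x i)
    (hJF : MaxUnifJPos J (LinearMap.range (T.comp Pp : lp (fun _ : I => ℂ) 2 →ₗ[ℂ] H)) ∧
      MaxUnifJNeg J (LinearMap.range (T.comp Pm : lp (fun _ : I => ℂ) 2 →ₗ[ℂ] H)))
    (Tp : H →L[ℂ] lp (fun _ : I => ℂ) 2)
    (hTp : ∀ (x : lp (fun _ : I => ℂ) 2) (y : H), kre J (T x) y = kre (Pp - Pm) x (Tp y))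
    (R : H →L[ℂ] H) (hRsq : R.comp R = T.comp Tp) (hRsa : IsJSelfAdj J R)
    (Rinv : H →L[ℂ] H)
    (hR1 : R.comp Rinv = ContinuousLinearMap.id ℂ H)
    (hR2 : Rinv.comp R = ContinuousLinearMap.id ℂ H) :
    (MaxUnifJPos J (LinearMap.range ((Rinv.comp T).comp Pp : lp (fun _ : I => ℂ) 2 →ₗ[ℂ] H)) ∧
        MaxUnifJNeg J (LinearMap.range ((Rinv.comp T).comp Pm : lp (fun _ : I => ℂ) 2 →ₗ[ℂ] H))) ∧
      (Rinv.comp (T.comp Tp)).comp Rinv = ContinuousLinearMap.id ℂ H ∧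
      (∀ i, Real.sign ((kre J (Rinv (f i)) (Rinv (f i))).re) =
        Real.sign ((kre J (f i) (f i)).re)) ∧
      (∃ U Uinv : H →L[ℂ] H, U.comp Uinv = ContinuousLinearMap.id ℂ H ∧
        Uinv.comp U = ContinuousLinearMap.id ℂ H ∧ ∀ i, U (f i) = Rinv (f i)) := by
  have hPQ : IsComplOrthProj Pp Pm := isComplOrthProj_of_apply hPp hPm
  have hdisj := hJF.1.1.disjoint hJF.2.1
  have hpos := unifJPos_range_inv_comp hPQ hTp hdisj hRsq hRsa hR1
  have hneg := unifJNeg_range_inv_comp hPQ hTp hdisj hRsq hRsa hR1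
  have hRinv_inj : Injective Rinv := LeftInverse.injective (g := R) (DFunLike.congr_fun hR1)
  have hRinv_surj : Surjective Rinv := RightInverse.surjective (g := R) (DFunLike.congr_fun hR2)
  have htop := hPQ.sup_range_comp_eq_top (A := Rinv.comp T) (hRinv_surj.comp hTsurj)
  refine ⟨⟨hpos.maxUnifJPos hneg htop, hneg.maxUnifJNeg hpos htop⟩, ?_, fun i => ?_,
    Rinv, R, hR2, hR1, fun _ => rfl⟩
  · rw [← hRsq, ← ContinuousLinearMap.comp_assoc, ContinuousLinearMap.comp_assoc, hR1,
      ContinuousLinearMap.comp_id, hR2]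
  · by_cases hi : posIdx J f i
    · have he := apply_lp_single_of_apply hPp hi 1
      exact hJF.1.1.sign_re_kre_apply hpos hRinv_inj ⟨lp.single 2 i 1, by simp [he, hT]⟩
        ⟨lp.single 2 i 1, by simp [he, hT]⟩
    · have he := apply_lp_single_of_apply (p := fun i => ¬posIdx J f i)
        (fun x i => by rw [hPm]; split_ifs <;> simp_all) hi 1
      exact hJF.2.1.sign_re_kre_apply hneg hRinv_inj ⟨lp.single 2 i 1, by simp [he, hT]⟩
        ⟨lp.single 2 i 1, by simp [he, hT]⟩

/-- `P = (S^(-1/2) f_i)` is a Parseval J-frame similar to `F` via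
`S^(-1/2)`, with the same signs. -/
theorem canonical_parseval_jframe
    (J : H →L[ℂ] H) (hJ : IsFundSym J) (f : I → H)
    (T : lp (fun _ : I => ℂ) 2 →L[ℂ] H)
    (hT : ∀ i, T (lp.single 2 i (1:ℂ)) = f i)
    (hTsurj : Function.Surjective T)
    (Pp Pm : lp (fun _ : I => ℂ) 2 →L[ℂ] lp (fun _ : I => ℂ) 2)
    (hPp : ∀ (x : lp (fun _ : I => ℂ) 2) (i : I), Pp x i = if posIdx J f i then x i else 0)
    (hPm : ∀ (x : lp (fun _ : I => ℂ) 2) (i : I), Pm x i = if posIdx J f i then 0 else x i)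
    (hJF : MaxUnifJPos J (LinearMap.range (T.comp Pp : lp (fun _ : I => ℂ) 2 →ₗ[ℂ] H)) ∧
      MaxUnifJNeg J (LinearMap.range (T.comp Pm : lp (fun _ : I => ℂ) 2 →ₗ[ℂ] H)))
    (Tp : H →L[ℂ] lp (fun _ : I => ℂ) 2)
    (hTp : ∀ (x : lp (fun _ : I => ℂ) 2) (y : H), kre J (T x) y = kre (Pp - Pm) x (Tp y))
    (R : H →L[ℂ] H) (hRsq : R.comp R = T.comp Tp) (hRsa : IsJSelfAdj J R)
    (Rinv : H →L[ℂ] H)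
    (hR1 : R.comp Rinv = ContinuousLinearMap.id ℂ H)
    (hR2 : Rinv.comp R = ContinuousLinearMap.id ℂ H)
    (hRspec : ∀ z ∈ spectrum ℂ R, |z.im| < z.re) :
    (MaxUnifJPos J (LinearMap.range ((Rinv.comp T).comp Pp : lp (fun _ : I => ℂ) 2 →ₗ[ℂ] H)) ∧
        MaxUnifJNeg J (LinearMap.range ((Rinv.comp T).comp Pm : lp (fun _ : I => ℂ) 2 →ₗ[ℂ] H))) ∧
      (Rinv.comp (T.comp Tp)).comp Rinv = ContinuousLinearMap.id ℂ H ∧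
      (∀ i, Real.sign ((kre J (Rinv (f i)) (Rinv (f i))).re) =
        Real.sign ((kre J (f i) (f i)).re)) ∧
      (∃ U Uinv : H →L[ℂ] H, U.comp Uinv = ContinuousLinearMap.id ℂ H ∧
        Uinv.comp U = ContinuousLinearMap.id ℂ H ∧ ∀ i, U (f i) = Rinv (f i)) :=
  canonical_parseval_jframe_general J f T hT hTsurj Pp Pm hPp hPm hJF Tp hTp R hRsq hRsa Rinv hR1
    hR2
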